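/- arXiv:2101.11086 — 2 statements merged into one kernel-verified Lean document; each statement's English description precedes it below -/
import Mathlib

section
/- For any real numbers t, u and η, the absolute difference |P(N(u,1) ≤ t) − P(N((1+η)u,1) ≤ t)| between the CDFs at t of a standard-variance Gaussian with mean u and one with mean (1+η)u is at most 2(1+|t|)·|η|. -/
/-!
Writing `Φ` for the standard normal CDF and `φ` for its density, the substitution
`x = t - (1 + s) u` gives `Φ(t - u) - Φ(t - (1 + η) u) = ∫₀^η u φ(t - (1 + s) u) ds`.
For `|s| ≤ 1/2` we have `|u| ≤ 2 |(1 + s) u| ≤ 2 (|t| + |x|)`, and `(1 + |x|) φ(x) ≤ 1`,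
so the integrand is bounded by `2 (1 + |t|)`. For `|η| ≥ 1/2` the bound exceeds `1`,
which trivially bounds the difference of two probabilities.
-/

open MeasureTheory ProbabilityTheory

open Real in
lemma one_add_abs_mul_gaussianPDFReal_le_one (x : ℝ) :
    (1 + |x|) * gaussianPDFReal 0 1 x ≤ 1 := by
  have h2pi : 2 ≤ √(2 * π) := by
    rw [Real.le_sqrt zero_le_two (by positivity)]; nlinarith [Real.pi_gt_three]
  -- `1 + |x| ≤ 2 (1 + x² / 2) ≤ 2 exp (x² / 2)`
  have hexp : 1 + |x| ≤ 2 * exp (x ^ 2 / 2) := by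
    nlinarith [Real.add_one_le_exp (x ^ 2 / 2), sq_abs x, sq_nonneg (|x| - 1)]
  calc (1 + |x|) * gaussianPDFReal 0 1 x = (1 + |x|) * exp (-x ^ 2 / 2) / √(2 * π) := by
        simp [gaussianPDFReal]; ring
    _ ≤ 2 * exp (x ^ 2 / 2) * exp (-x ^ 2 / 2) / 2 := by gcongr
    _ = 1 := by rw [mul_assoc, ← exp_add, neg_div, add_neg_cancel, exp_zero]; norm_num

lemma abs_mul_gaussianPDFReal_mean_scale_le (t u s : ℝ) (hs : |s| ≤ 1 / 2) :
    |u| * gaussianPDFReal 0 1 (t - (1 + s) * u) ≤ 2 * (1 + |t|) := by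
  set x := t - (1 + s) * u
  have hscale : 1 / 2 ≤ |1 + s| := by
    linarith [neg_abs_le s, le_abs_self (1 + s)]
  have hu : |u| ≤ 2 * (|t| + |x|) := by
    calc |u| ≤ 2 * (|1 + s| * |u|) := by nlinarith [abs_nonneg u]
      _ = 2 * |t - x| := by rw [← abs_mul]; congr 2; ring
      _ ≤ 2 * (|t| + |x|) := by gcongr; exact abs_sub _ _
  calc |u| * gaussianPDFReal 0 1 x
      ≤ 2 * (1 + |t|) * ((1 + |x|) * gaussianPDFReal 0 1 x) := by
        have := gaussianPDFReal_nonneg 0 1 x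
        nlinarith [mul_nonneg (abs_nonneg t) (abs_nonneg x)]
    _ ≤ 2 * (1 + |t|) := by
        grw [one_add_abs_mul_gaussianPDFReal_le_one x, mul_one]

lemma gaussianReal_Iic_eq_Iic_sub (μ : ℝ) (v : NNReal) (t : ℝ) :
    gaussianReal μ v (Set.Iic t) = gaussianReal 0 v (Set.Iic (t - μ)) := by
  rw [← zero_add μ, ← gaussianReal_map_add_const,
    Measure.map_apply (measurable_add_const μ) measurableSet_Iic, zero_add]
  congr 1
  ext x
  simp [le_sub_iff_add_le]

lemma gaussianReal_Iic_sub_Iic_eq_integral (μ : ℝ) {v : NNReal} (hv : v ≠ 0) (a b : ℝ) :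
    (gaussianReal μ v (Set.Iic b)).toReal - (gaussianReal μ v (Set.Iic a)).toReal =
      ∫ x in a..b, gaussianPDFReal μ v x := by
  have hIic (c : ℝ) :
      (gaussianReal μ v (Set.Iic c)).toReal = ∫ x in Set.Iic c, gaussianPDFReal μ v x := by
    rw [gaussianReal_apply_eq_integral μ hv, ENNReal.toReal_ofReal]
    exact setIntegral_nonneg measurableSet_Iic fun x _ ↦ gaussianPDFReal_nonneg μ v x
  rw [hIic, hIic, intervalIntegral.integral_Iic_sub_Iic]
  exacts [(integrable_gaussianPDFReal μ v).integrableOn,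
    (integrable_gaussianPDFReal μ v).integrableOn]

lemma gaussianReal_Iic_sub_mean_scale_Iic_eq_integral {v : NNReal} (hv : v ≠ 0) (t u η : ℝ) :
    (gaussianReal u v (Set.Iic t)).toReal - (gaussianReal ((1 + η) * u) v (Set.Iic t)).toReal =
      ∫ s in 0..η, u * gaussianPDFReal 0 v (t - (1 + s) * u) := by
  rw [gaussianReal_Iic_eq_Iic_sub, gaussianReal_Iic_eq_Iic_sub ((1 + η) * u),
    gaussianReal_Iic_sub_Iic_eq_integral 0 hv, intervalIntegral.integral_const_mul]
  simp_rw [show ∀ s, t - (1 + s) * u = t - u - u * s by intro s; ring,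
    intervalIntegral.mul_integral_comp_sub_mul, mul_zero, sub_zero]

/-- Le Cam mean-shift lemma: for any real `t`, `u`, `η`, the Gaussian CDFs with
means `u` and `(1+η)·u` (variance 1) at `t` differ by at most `2(1+|t|)·|η|`. -/
theorem gaussian_cdf_mean_scale_diff (t u η : ℝ) :
    |((gaussianReal u 1) (Set.Iic t)).toReal -
      ((gaussianReal ((1 + η) * u) 1) (Set.Iic t)).toReal| ≤ 2 * (1 + |t|) * |η| := by
  rcases le_or_gt (1 / 2) |η| with hη | hη
  · calc _ ≤ 1 := abs_sub_le_of_nonneg_of_le measureReal_nonneg measureReal_le_one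
          measureReal_nonneg measureReal_le_one
      _ ≤ 2 * (1 + |t|) * |η| := by nlinarith [abs_nonneg t]
  · have hbound : ∀ s ∈ Set.uIoc 0 η,
        ‖u * gaussianPDFReal 0 1 (t - (1 + s) * u)‖ ≤ 2 * (1 + |t|) := by
      intro s hs
      have hs' : |s - 0| ≤ |η - 0| := Set.abs_sub_left_of_mem_uIcc (Set.uIoc_subset_uIcc hs)
      rw [sub_zero, sub_zero] at hs'
      rw [Real.norm_eq_abs, abs_mul, abs_of_nonneg (gaussianPDFReal_nonneg _ _ _)]
      exact abs_mul_gaussianPDFReal_mean_scale_le t u s (hs'.trans hη.le)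
    rw [gaussianReal_Iic_sub_mean_scale_Iic_eq_integral one_ne_zero]
    simpa using intervalIntegral.norm_integral_le_of_norm_le_const hbound
end

section
/- Let Z ∈ ℝ^{N×p} have i.i.d. standard Gaussian entries and let A ∈ ℝ^{p×p}. Then E‖ZA‖_F⁴ ≤ 4N‖A^T A‖_F² + N²‖A‖_F⁴ ≤ 5N²‖A‖_F⁴. -/
/-!
Write `C = A Aᵀ`, so that `‖ZA‖_F² = tr(Z C Zᵀ) = ∑ₗ ∑ₖₘ Cₖₘ zₗₖ zₗₘ` is a quadratic form in
the entries of `Z`. Its square is a quartic polynomial, integrated term by term with Isserlis'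
formula `E[z_a z_b z_c z_d] = δ_ab δ_cd + δ_ac δ_bd + δ_ad δ_bc`, itself a consequence of
independence and the moments `E z² = 1`, `E z⁴ = 3`, `E z = E z³ = 0`. This gives
`E‖ZA‖_F⁴ = N² (tr C)² + 2N ‖C‖_F²` exactly. The second inequality is submultiplicativity of the
Frobenius norm, `‖AᵀA‖_F ≤ ‖A‖_F²`.
-/

open MeasureTheory ProbabilityTheory Matrix Real Finset
open scoped NNReal Nat

section GaussianMoments

lemma integrable_pow_gaussianReal (μ : ℝ) (v : ℝ≥0) (n : ℕ) :
    Integrable (fun x : ℝ => x ^ n) (gaussianReal μ v) :=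
  (memLp_id_gaussianReal n).integrable_norm_pow'.mono' (by fun_prop)
    (ae_of_all _ fun x => by simp)

lemma integral_pow_gaussianReal_of_odd (v : ℝ≥0) {n : ℕ} (hn : Odd n) :
    ∫ x, x ^ n ∂gaussianReal 0 v = 0 := by
  have h : ∫ x, x ^ n ∂gaussianReal 0 v = ∫ x, (-x) ^ n ∂gaussianReal 0 v := by
    conv_lhs => rw [← neg_zero, ← gaussianReal_map_neg]
    rw [integral_map (by fun_prop) (by fun_prop)]
  simp only [hn.neg_pow, integral_neg] at h
  linarith

lemma integral_pow_two_mul_mul_exp_neg_sq_div_two (k : ℕ) :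
    ∫ x, x ^ (2 * k) * rexp (-x ^ 2 / 2) = √(2 * π) * (2 * k - 1 : ℕ)‼ := by
  have hIoi := integral_rpow_mul_exp_neg_mul_rpow (p := 2) (q := 2 * k) (b := 1 / 2) two_pos
    (by linarith [(Nat.cast_nonneg k : (0 : ℝ) ≤ k)]) (by norm_num)
  have hscale : (1 / 2 : ℝ) ^ (-((2 * k : ℝ) + 1) / 2) = 2 ^ k * √2 := by
    rw [one_div, inv_rpow zero_le_two, ← rpow_neg zero_le_two, neg_div, neg_neg,
      show (2 * k + 1 : ℝ) / 2 = k + 1 / 2 by ring, rpow_add two_pos, rpow_natCast, sqrt_eq_rpow]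
  calc ∫ x, x ^ (2 * k) * rexp (-x ^ 2 / 2)
      = ∫ x, |x| ^ (2 * k) * rexp (-|x| ^ 2 / 2) := by simp [pow_mul]
    _ = 2 * ∫ x in Set.Ioi 0, x ^ (2 * k : ℝ) * rexp (-(1 / 2) * x ^ (2 : ℝ)) := by
      rw [integral_comp_abs (f := fun x => x ^ (2 * k) * rexp (-x ^ 2 / 2))]
      congr 1
      refine setIntegral_congr_fun measurableSet_Ioi fun x _ => ?_
      rw [show (2 * k : ℝ) = ((2 * k : ℕ) : ℝ) by push_cast; ring, rpow_natCast, rpow_two]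
      ring_nf
    _ = √(2 * π) * (2 * k - 1 : ℕ)‼ := by
      rw [hIoi, hscale, show ((2 * k : ℝ) + 1) / 2 = k + 1 / 2 by ring, Gamma_nat_add_half,
        sqrt_mul zero_le_two]
      field_simp

lemma integral_pow_two_mul_gaussianReal (k : ℕ) :
    ∫ x, x ^ (2 * k) ∂gaussianReal 0 1 = (2 * k - 1 : ℕ)‼ := by
  rw [integral_gaussianReal_eq_integral_smul one_ne_zero]
  simp only [gaussianPDFReal, smul_eq_mul, NNReal.coe_one, mul_one, sub_zero]
  simp_rw [mul_assoc, integral_const_mul, mul_comm (rexp _),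
    integral_pow_two_mul_mul_exp_neg_sq_div_two]
  have : 0 < √(2 * π) := by positivity
  field_simp

end GaussianMoments

lemma mul_mul_mul_eq_multiset_prod_map {ι M : Type*} [CommMonoid M] (f : ι → M) (a b c d : ι) :
    f a * f b * f c * f d = (({a, b, c, d} : Multiset ι).map f).prod := by
  simp [mul_assoc]

section Monomials

variable {ι : Type*} [Fintype ι] [DecidableEq ι]

lemma multiset_prod_map_eq_prod_pow {M : Type*} [CommMonoid M] (s : Multiset ι) (f : ι → M) :
    (s.map f).prod = ∏ i, f i ^ s.count i := by
  rw [prod_multiset_map_count]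
  exact prod_subset (subset_univ _) fun i _ hi => by
    rw [Multiset.count_eq_zero.2 (Multiset.mem_toFinset.not.1 hi), pow_zero]

lemma integral_multiset_prod_pi (μ : ι → Measure ℝ) [∀ i, SigmaFinite (μ i)] (s : Multiset ι) :
    ∫ z : ι → ℝ, (s.map z).prod ∂Measure.pi μ = ∏ i, ∫ x, x ^ s.count i ∂μ i := by
  simp_rw [multiset_prod_map_eq_prod_pow]
  exact integral_fintype_prod_eq_prod (fun i x => x ^ s.count i)

lemma integrable_multiset_prod_pi (μ : ι → Measure ℝ) [∀ i, SigmaFinite (μ i)]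
    (hμ : ∀ i n, Integrable (fun x : ℝ => x ^ n) (μ i)) (s : Multiset ι) :
    Integrable (fun z : ι → ℝ => (s.map z).prod) (Measure.pi μ) := by
  simp_rw [multiset_prod_map_eq_prod_pow]
  exact Integrable.fintype_prod (f := fun i x => x ^ s.count i) fun i => hμ i _

lemma integrable_mul_mul_mul_pi_gaussianReal (a b c d : ι) :
    Integrable (fun z : ι → ℝ => z a * z b * z c * z d)
      (Measure.pi fun _ => gaussianReal 0 1) := by
  simp_rw [mul_mul_mul_eq_multiset_prod_map]
  exact integrable_multiset_prod_pi _ (fun _ => integrable_pow_gaussianReal 0 1) _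

lemma integral_mul_mul_mul_pi_gaussianReal (a b c d : ι) :
    ∫ z : ι → ℝ, z a * z b * z c * z d ∂Measure.pi (fun _ => gaussianReal 0 1) =
      (if a = b ∧ c = d then 1 else 0) + (if a = c ∧ b = d then 1 else 0)
        + (if a = d ∧ b = c then 1 else 0) := by
  have m1 : ∫ x, x ^ 1 ∂gaussianReal 0 1 = 0 := integral_pow_gaussianReal_of_odd 1 odd_one
  have m2 : ∫ x, x ^ 2 ∂gaussianReal 0 1 = 1 := by
    simpa using integral_pow_two_mul_gaussianReal 1
  have m3 : ∫ x, x ^ 3 ∂gaussianReal 0 1 = 0 := integral_pow_gaussianReal_of_odd 1 (by decide)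
  have m4 : ∫ x, x ^ 4 ∂gaussianReal 0 1 = 3 := by
    simpa [Nat.doubleFactorial] using integral_pow_two_mul_gaussianReal 2
  simp_rw [mul_mul_mul_eq_multiset_prod_map, integral_multiset_prod_pi]
  rw [← prod_subset (subset_univ ({a, b, c, d} : Multiset ι).toFinset) fun i _ hi => by
    rw [Multiset.count_eq_zero.2 (Multiset.mem_toFinset.not.1 hi)]; simp]
  by_cases hab : a = b <;> by_cases hac : a = c <;> by_cases had : a = d <;>
    by_cases hbc : b = c <;> by_cases hbd : b = d <;> by_cases hcd : c = d <;>
    subst_vars <;> norm_num [prod_insert, Multiset.count_cons, Ne.symm, *]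

end Monomials

section QuadraticForm

variable {α β : Type*} [Fintype α] [Fintype β]

lemma trace_transpose_mul_transpose_mul_mul {R : Type*} [CommSemiring R]
    (Z : Matrix α β R) (A : Matrix β β R) :
    trace (Aᵀ * Zᵀ * Z * A) = trace (Z * (A * Aᵀ) * Zᵀ) := by
  rw [trace_mul_cycle, trace_mul_cycle, ← Matrix.mul_assoc, ← Matrix.mul_assoc]

lemma trace_mul_mul_transpose_eq_sum (Z : Matrix α β ℝ) (C : Matrix β β ℝ) :
    trace (Z * C * Zᵀ) = ∑ v : α × β × β, C v.2.1 v.2.2 * (Z v.1 v.2.1 * Z v.1 v.2.2) := by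
  simp only [trace, Matrix.diag, Matrix.mul_apply, transpose_apply, sum_mul, Fintype.sum_prod_type]
  refine sum_congr rfl fun l _ => sum_comm.trans ?_
  simp only [mul_comm, mul_left_comm]

lemma sq_trace_mul_mul_transpose_eq_sum (Z : Matrix α β ℝ) (C : Matrix β β ℝ) :
    trace (Z * C * Zᵀ) ^ 2 = ∑ u : (α × β × β) × (α × β × β),
      C u.1.2.1 u.1.2.2 * C u.2.2.1 u.2.2.2 *
        (Z u.1.1 u.1.2.1 * Z u.1.1 u.1.2.2 * Z u.2.1 u.2.2.1 * Z u.2.1 u.2.2.2) := by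
  rw [sq, trace_mul_mul_transpose_eq_sum, sum_mul_sum, ← Fintype.sum_prod_type']
  exact Fintype.sum_congr _ _ fun u => by ring

variable [DecidableEq α] [DecidableEq β]

lemma integral_sq_trace_mul_mul_transpose_pi_gaussianReal (C : Matrix β β ℝ) :
    ∫ z : α × β → ℝ, trace (of (fun i j => z (i, j)) * C * (of fun i j => z (i, j))ᵀ) ^ 2
        ∂Measure.pi (fun _ => gaussianReal 0 1) =
      Fintype.card α ^ 2 * trace C ^ 2 + Fintype.card α * (trace (C * Cᵀ) + trace (C * C)) := by
  simp only [sq_trace_mul_mul_transpose_eq_sum, of_apply]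
  rw [integral_finsetSum _ fun u _ =>
    (integrable_mul_mul_mul_pi_gaussianReal _ _ _ _).const_mul _]
  simp only [integral_const_mul, integral_mul_mul_mul_pi_gaussianReal, Prod.mk.injEq,
    Fintype.sum_prod_type]
  simp only [trace, Matrix.diag, Matrix.mul_apply, transpose_apply]
  simp only [true_and, ite_and, mul_add, mul_ite, mul_one, mul_zero, sum_add_distrib,
    sum_ite_irrel, sum_ite_eq, mem_univ, ↓reduceIte, sum_const_zero, sum_const, card_univ,
    nsmul_eq_mul, mul_sum, sq, sum_mul, mul_assoc]
  rw [sum_comm]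
  ring

end QuadraticForm

section Frobenius

attribute [local instance] Matrix.frobeniusNormedAddCommGroup

variable {m n : Type*} [Fintype m] [Fintype n]

lemma trace_transpose_mul_self_eq_frobenius_norm_sq (M : Matrix m n ℝ) :
    trace (Mᵀ * M) = ‖M‖ ^ 2 := by
  rw [frobenius_norm_def, ← rpow_natCast, ← rpow_mul (by positivity)]
  norm_num [trace, mul_apply, sum_comm (γ := n), sq]

lemma trace_transpose_mul_self_nonneg (M : Matrix m n ℝ) : 0 ≤ trace (Mᵀ * M) := by
  rw [trace_transpose_mul_self_eq_frobenius_norm_sq]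
  positivity

lemma trace_sq_transpose_mul_self_le (A : Matrix m n ℝ) :
    trace ((Aᵀ * A)ᵀ * (Aᵀ * A)) ≤ trace (Aᵀ * A) ^ 2 := by
  rw [trace_transpose_mul_self_eq_frobenius_norm_sq,
    trace_transpose_mul_self_eq_frobenius_norm_sq, ← pow_mul]
  calc ‖Aᵀ * A‖ ^ 2 ≤ (‖Aᵀ‖ * ‖A‖) ^ 2 := by gcongr; exact frobenius_norm_mul _ _
    _ = ‖A‖ ^ (2 * 2) := by rw [frobenius_norm_transpose]; ring

end Frobenius

/-- For `Z ∈ ℝ^{N×p}` with i.i.d. standard Gaussian entries and `A ∈ ℝ^{p×p}`: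
`E‖ZA‖_F⁴ ≤ 4N‖AᵀA‖_F² + N²‖A‖_F⁴ ≤ 5N²‖A‖_F⁴`, where
`‖ZA‖_F² = tr(Aᵀ Zᵀ Z A)`. -/
theorem gaussian_matrix_frobenius_fourth_moment (N p : ℕ) (A : Matrix (Fin p) (Fin p) ℝ) :
    (∫ z : Fin N × Fin p → ℝ,
        (Matrix.trace (Aᵀ * (Matrix.of fun i j => z (i, j))ᵀ *
            (Matrix.of fun i j => z (i, j)) * A)) ^ 2
        ∂(Measure.pi fun _ : Fin N × Fin p => gaussianReal 0 1))
      ≤ 4 * N * Matrix.trace ((Aᵀ * A)ᵀ * (Aᵀ * A))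
          + N ^ 2 * (Matrix.trace (Aᵀ * A)) ^ 2 ∧
    4 * N * Matrix.trace ((Aᵀ * A)ᵀ * (Aᵀ * A)) + N ^ 2 * (Matrix.trace (Aᵀ * A)) ^ 2
      ≤ 5 * N ^ 2 * (Matrix.trace (Aᵀ * A)) ^ 2 := by
  have hCfrob : trace (A * Aᵀ * (A * Aᵀ)ᵀ) = trace ((Aᵀ * A)ᵀ * (Aᵀ * A)) := by
    simp only [transpose_mul, transpose_transpose, Matrix.mul_assoc]
    rw [trace_mul_comm]
    simp only [Matrix.mul_assoc]
  have hCsymm : A * Aᵀ * (A * Aᵀ) = A * Aᵀ * (A * Aᵀ)ᵀ := by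
    rw [transpose_mul, transpose_transpose]
  have hmoment : ∫ z : Fin N × Fin p → ℝ,
      trace (Aᵀ * (of fun i j => z (i, j))ᵀ * (of fun i j => z (i, j)) * A) ^ 2
        ∂Measure.pi (fun _ => gaussianReal 0 1) =
      N ^ 2 * trace (Aᵀ * A) ^ 2 + 2 * N * trace ((Aᵀ * A)ᵀ * (Aᵀ * A)) := by
    simp_rw [trace_transpose_mul_transpose_mul_mul,
      integral_sq_trace_mul_mul_transpose_pi_gaussianReal, hCsymm, hCfrob, trace_mul_comm A Aᵀ,
      Fintype.card_fin]
    ring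
  have hF := trace_transpose_mul_self_nonneg (Aᵀ * A)
  have hFT := trace_sq_transpose_mul_self_le A
  have hN : (N : ℝ) ≤ N ^ 2 := by exact_mod_cast Nat.le_self_pow two_ne_zero N
  rw [hmoment]
  constructor
  · nlinarith [Nat.cast_nonneg (α := ℝ) N]
  · nlinarith [Nat.cast_nonneg (α := ℝ) N, sq_nonneg (trace (Aᵀ * A))]
end
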